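/- Let D be a (super) edge-magic digraph with labeling f, let p be odd, let k = (p+3)/2, and let h : E(D) → S_p^{(p+3)/2} be any function. Let f̂ be the edge-magic labeling of D ⊗_h S_p^{(p+3)/2} induced by f. Then the valence of the complementary labeling of f̂ equals the valence of the labeling of the product induced by the complementary labeling f̄ of f; that is, val(over-line(f̂)) = val(hat(f̄)). -/

import Mathlib

open Finset

/-- `(fv, fa)` is an edge-magic labeling with valence `k` of the digraph with vertex set
`Vs` and arc set `A` (i.e. of its underlying graph): the labels form a bijection from
`V ∪ E` onto `[1, |V| + |E|]` and every arc `(u,v)` satisfies `fv u + fa (u,v) + fv v = k`. -/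
def DIsEdgeMagic {β : Type*} [DecidableEq β] (Vs : Finset β) (A : Finset (β × β))
    (fv : β → ℤ) (fa : β × β → ℤ) (k : ℤ) : Prop :=
  Vs.image fv ∪ A.image fa = Finset.Icc 1 ((Vs.card : ℤ) + (A.card : ℤ)) ∧
  ∀ a ∈ A, fv a.1 + fa a + fv a.2 = k

/-- A super edge-magic labeling of a digraph: edge-magic and the vertex labels are
exactly `[1, |V|]`. -/
def DIsSuperEdgeMagic {β : Type*} [DecidableEq β] (Vs : Finset β) (A : Finset (β × β))
    (fv : β → ℤ) (fa : β × β → ℤ) (k : ℤ) : Prop :=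
  DIsEdgeMagic Vs A fv fa k ∧ Vs.image fv = Finset.Icc 1 (Vs.card : ℤ)

/-- Membership in the family `S_p^k`: a digraph on the vertex set `[1,p] ⊆ ℤ`
(vertices named after their labels), with exactly `p` arcs, whose induced edge sums
are exactly `{k, k+1, …, k+p-1}`. -/
def memSpk (p : ℕ) (k : ℤ) (F : Finset (ℤ × ℤ)) : Prop :=
  (∀ a ∈ F, a.1 ∈ Finset.Icc (1 : ℤ) (p : ℤ) ∧ a.2 ∈ Finset.Icc (1 : ℤ) (p : ℤ)) ∧
  F.card = p ∧
  F.image (fun a => a.1 + a.2) = Finset.Icc k (k + (p : ℤ) - 1)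

/-- The arc set of the product `D ⊗_h Γ`, where `D` has arc set `A` and `h` assigns to
each arc of `D` a digraph on a vertex set contained in `ℤ`:
`((a,i),(b,j))` is an arc iff `(a,b) ∈ A` and `(i,j) ∈ h (a,b)`. -/
def prodArcs {α : Type*} [DecidableEq α] (A : Finset (α × α))
    (h : α × α → Finset (ℤ × ℤ)) : Finset ((α × ℤ) × (α × ℤ)) :=
  A.biUnion fun ab => (h ab).image fun ij => ((ab.1, ij.1), (ab.2, ij.2))

/-- Isomorphism of digraphs given by vertex sets and arc sets. -/
def DigraphIso {β γ : Type*} [DecidableEq β] [DecidableEq γ]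
    (V1 : Finset β) (A1 : Finset (β × β)) (V2 : Finset γ) (A2 : Finset (γ × γ)) : Prop :=
  ∃ φ : β → γ, Set.InjOn φ ↑V1 ∧ V1.image φ = V2 ∧ A1.image (Prod.map φ φ) = A2

/-- Isomorphism of labeled digraphs: a digraph isomorphism preserving all vertex and
arc labels. -/
def LabeledDigraphIso {β γ : Type*} [DecidableEq β] [DecidableEq γ]
    (V1 : Finset β) (A1 : Finset (β × β)) (fv1 : β → ℤ) (fa1 : β × β → ℤ)
    (V2 : Finset γ) (A2 : Finset (γ × γ)) (fv2 : γ → ℤ) (fa2 : γ × γ → ℤ) : Prop :=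
  ∃ φ : β → γ, Set.InjOn φ ↑V1 ∧ V1.image φ = V2 ∧
    A1.image (Prod.map φ φ) = A2 ∧
    (∀ x ∈ V1, fv2 (φ x) = fv1 x) ∧
    (∀ a ∈ A1, fa2 (φ a.1, φ a.2) = fa1 a)

/-- The vertex labels of the labeling of `D ⊗_h S_p^k` induced by a labeling `gv` of the
vertices of `D`: the vertex `(a,i)` receives `p(gv a - 1) + i`. -/
def inducedVert {α : Type*} (p : ℕ) (gv : α → ℤ) : α × ℤ → ℤ :=
  fun x => (p : ℤ) * (gv x.1 - 1) + x.2

/-- The arc labels of the labeling of `D ⊗_h S_p^k` induced by an arc labeling `ga` of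
`D`: the arc `((a,i),(b,j))` receives `p(ga (a,b) - 1) + (k + p) - (i + j)`. -/
def inducedArc {α : Type*} (p : ℕ) (k : ℤ) (ga : α × α → ℤ) :
    (α × ℤ) × (α × ℤ) → ℤ :=
  fun x => (p : ℤ) * (ga (x.1.1, x.2.1) - 1) + (k + (p : ℤ)) - (x.1.2 + x.2.2)

/-!
The labeling `f̂` maps the vertices `{a} × [1,p]`, and the arcs lying over an arc `e` of `D`
(their sums `i + j` run through `[k, k + p - 1]`), onto the block of `p` consecutive integers
ending at `p · f(a)`, resp. `p · f(e)`; so `f̂` is edge-magic with valence `p · val f - 2p + k`.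
Complementing an edge-magic labeling of a graph with `N` vertices and edges turns the valence
`κ` into `3(N + 1) - κ`. The two valences so computed differ by `2k - p - 3`.
-/

theorem Finset.image_const_sub_Icc {α : Type*} [AddCommGroup α] [PartialOrder α]
    [IsOrderedAddMonoid α] [LocallyFiniteOrder α] [DecidableEq α] (a b c : α) :
    (Icc b c).image (a - ·) = Icc (a - c) (a - b) :=
  coe_injective <| by push_cast; exact Set.image_const_sub_Icc a b c

noncomputable def labelBlock (p : ℕ) (m : ℤ) : Finset ℤ :=
  Icc ((p : ℤ) * (m - 1) + 1) ((p : ℤ) * m)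

theorem biUnion_Icc_labelBlock (p : ℕ) (n : ℤ) :
    (Icc 1 n).biUnion (labelBlock p) = Icc 1 ((p : ℤ) * n) := by
  ext x
  simp only [mem_biUnion, mem_Icc, labelBlock]
  constructor
  · rintro ⟨m, ⟨hm1, hmn⟩, hx1, hxm⟩
    exact ⟨by linarith [mul_nonneg (Int.natCast_nonneg p) (sub_nonneg.2 hm1)],
      hxm.trans (by gcongr)⟩
  · rintro ⟨hx1, hxn⟩
    have hp : (0 : ℤ) < p := by
      refine Int.natCast_pos.2 (Nat.pos_of_ne_zero ?_)
      rintro rfl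
      simp only [Nat.cast_zero, zero_mul] at hxn
      omega
    -- `x` lies in the block with index `(x - 1) / p + 1`
    have hdiv := Int.mul_ediv_add_emod (x - 1) p
    have hmod0 := Int.emod_nonneg (x - 1) hp.ne'
    have hmodp := Int.emod_lt_of_pos (x - 1) hp
    have hq0 : 0 ≤ (x - 1) / p := Int.ediv_nonneg (by omega) hp.le
    have hq : (x - 1) / p < n := lt_of_mul_lt_mul_left (by linarith) hp.le
    exact ⟨(x - 1) / p + 1, ⟨by omega, by omega⟩, by linarith, by linarith⟩

section Product

variable {α : Type*} [DecidableEq α]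

theorem mem_prodArcs {A : Finset (α × α)} {h : α × α → Finset (ℤ × ℤ)}
    {x : (α × ℤ) × (α × ℤ)} :
    x ∈ prodArcs A h ↔ (x.1.1, x.2.1) ∈ A ∧ (x.1.2, x.2.2) ∈ h (x.1.1, x.2.1) := by
  obtain ⟨⟨a, i⟩, ⟨b, j⟩⟩ := x
  simp only [prodArcs, mem_biUnion, mem_image, Prod.exists, Prod.mk.injEq]
  constructor
  · rintro ⟨a, b, hab, i, j, hij, ⟨rfl, rfl⟩, rfl, rfl⟩
    exact ⟨hab, hij⟩
  · rintro ⟨hab, hij⟩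
    exact ⟨a, b, hab, i, j, hij, ⟨rfl, rfl⟩, rfl, rfl⟩

theorem card_prodArcs {A : Finset (α × α)} {h : α × α → Finset (ℤ × ℤ)} {p : ℕ}
    (hh : ∀ a ∈ A, (h a).card = p) : (prodArcs A h).card = A.card * p := by
  rw [prodArcs, card_biUnion]
  · rw [sum_congr rfl fun ab hab => ?_, sum_const, smul_eq_mul]
    rw [card_image_of_injective _ fun x y hxy => ?_, hh ab hab]
    simp only [Prod.mk.injEq] at hxy
    exact Prod.ext hxy.1.2 hxy.2.2
  · intro ab _ ab' _ hne
    rw [Function.onFun, disjoint_left]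
    rintro _ hx hx'
    obtain ⟨ij, -, rfl⟩ := mem_image.1 hx
    obtain ⟨ij', -, heq⟩ := mem_image.1 hx'
    simp only [Prod.mk.injEq] at heq
    exact hne (Prod.ext heq.1.1.symm heq.2.1.symm)

theorem card_product_Icc_add_card_prodArcs (Vs : Finset α) {A : Finset (α × α)}
    {h : α × α → Finset (ℤ × ℤ)} {p : ℕ} (hh : ∀ a ∈ A, (h a).card = p) :
    ((Vs ×ˢ Icc (1 : ℤ) p).card : ℤ) + (prodArcs A h).card
      = (p : ℤ) * ((Vs.card : ℤ) + (A.card : ℤ)) := by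
  rw [card_product, card_prodArcs hh, Int.card_Icc]
  push_cast
  simp only [add_sub_cancel_right, Int.toNat_natCast]
  ring

theorem image_inducedVert (Vs : Finset α) (p : ℕ) (gv : α → ℤ) :
    (Vs ×ˢ Icc (1 : ℤ) p).image (inducedVert p gv) = (Vs.image gv).biUnion (labelBlock p) := by
  rw [product_eq_biUnion, biUnion_image, image_biUnion]
  refine biUnion_congr rfl fun a _ => ?_
  rw [image_image]
  change (Icc 1 (p : ℤ)).image ((p : ℤ) * (gv a - 1) + ·) = _
  rw [image_add_left_Icc, labelBlock]
  congr 1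
  ring

theorem image_inducedArc {A : Finset (α × α)} {h : α × α → Finset (ℤ × ℤ)} {p : ℕ} {k : ℤ}
    (hh : ∀ a ∈ A, (h a).image (fun ij => ij.1 + ij.2) = Icc k (k + p - 1))
    (ga : α × α → ℤ) :
    (prodArcs A h).image (inducedArc p k ga) = (A.image ga).biUnion (labelBlock p) := by
  rw [prodArcs, biUnion_image, image_biUnion]
  refine biUnion_congr rfl fun ab hab => ?_
  have hlabel : inducedArc p k ga ∘ (fun ij : ℤ × ℤ => ((ab.1, ij.1), (ab.2, ij.2)))
      = ((p : ℤ) * (ga ab - 1) + (k + p) - ·) ∘ (fun ij : ℤ × ℤ => ij.1 + ij.2) := rfl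
  rw [image_image, hlabel, ← image_image, hh ab hab, image_const_sub_Icc, labelBlock]
  congr 1 <;> ring

end Product

namespace DIsEdgeMagic

variable {α : Type*} [DecidableEq α] {Vs : Finset α} {A : Finset (α × α)}
  {fv : α → ℤ} {fa : α × α → ℤ} {κ : ℤ}

theorem compl (hf : DIsEdgeMagic Vs A fv fa κ) :
    DIsEdgeMagic Vs A (fun x => (Vs.card : ℤ) + (A.card : ℤ) + 1 - fv x)
      (fun x => (Vs.card : ℤ) + (A.card : ℤ) + 1 - fa x)
      (3 * ((Vs.card : ℤ) + (A.card : ℤ) + 1) - κ) := by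
  set N : ℤ := (Vs.card : ℤ) + (A.card : ℤ)
  refine ⟨?_, fun a ha => by linear_combination -hf.2 a ha⟩
  calc Vs.image (fun x => N + 1 - fv x) ∪ A.image (fun x => N + 1 - fa x)
      = (Vs.image fv ∪ A.image fa).image (N + 1 - ·) := by
        rw [image_union, image_image, image_image]; rfl
    _ = Icc 1 N := by
        rw [hf.1, image_const_sub_Icc]
        congr 1 <;> ring

theorem induced (hf : DIsEdgeMagic Vs A fv fa κ) {p : ℕ} {k : ℤ}
    {h : α × α → Finset (ℤ × ℤ)} (hh : ∀ a ∈ A, memSpk p k (h a)) :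
    DIsEdgeMagic (Vs ×ˢ Icc (1 : ℤ) p) (prodArcs A h) (inducedVert p fv) (inducedArc p k fa)
      (p * κ - 2 * p + k) := by
  refine ⟨?_, fun ⟨⟨a, i⟩, ⟨b, j⟩⟩ hx => ?_⟩
  · rw [card_product_Icc_add_card_prodArcs Vs fun a ha => (hh a ha).2.1,
      image_inducedVert, image_inducedArc fun a ha => (hh a ha).2.2, ← union_biUnion, hf.1,
      biUnion_Icc_labelBlock]
  · simp only [inducedVert, inducedArc]
    linear_combination (p : ℤ) * hf.2 (a, b) (mem_prodArcs.1 hx).1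

end DIsEdgeMagic

theorem stmt8_general {α : Type*} [DecidableEq α] (Vs : Finset α) (A : Finset (α × α))
    (p : ℕ) (k : ℤ) (hk : 2 * k = (p : ℤ) + 3)
    (h : α × α → Finset (ℤ × ℤ)) (hh : ∀ a ∈ A, memSpk p k (h a))
    (fv : α → ℤ) (fa : α × α → ℤ) (κ : ℤ)
    (hf : DIsEdgeMagic Vs A fv fa κ) :
    ∃ v : ℤ,
      -- the complementary labeling of the induced labeling `f̂` has valence `v`
      DIsEdgeMagic (Vs ×ˢ Finset.Icc (1 : ℤ) (p : ℤ)) (prodArcs A h)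
        (fun x => (p : ℤ) * ((Vs.card : ℤ) + (A.card : ℤ)) + 1 - inducedVert p fv x)
        (fun x => (p : ℤ) * ((Vs.card : ℤ) + (A.card : ℤ)) + 1 - inducedArc p k fa x)
        v ∧
      -- the labeling induced by the complementary labeling `f̄` also has valence `v`
      DIsEdgeMagic (Vs ×ˢ Finset.Icc (1 : ℤ) (p : ℤ)) (prodArcs A h)
        (inducedVert p (fun a => (Vs.card : ℤ) + (A.card : ℤ) + 1 - fv a))
        (inducedArc p k (fun a => (Vs.card : ℤ) + (A.card : ℤ) + 1 - fa a))
        v := by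
  refine ⟨_, ?_, hf.compl.induced hh⟩
  have hcompl := (hf.induced hh).compl
  rw [card_product_Icc_add_card_prodArcs Vs fun a ha => (hh a ha).2.1] at hcompl
  convert hcompl using 1
  linear_combination hk

/-- Let `D` be an edge-magic digraph with labeling `f`, let `p` be odd, `k = (p+3)/2`, and
`h : E(D) → S_p^{(p+3)/2}`. Then the complementary labeling of the induced labeling `f̂`
of `D ⊗_h S_p^{(p+3)/2}` and the labeling of the product induced by the complementary
labeling `f̄` of `f` are edge-magic with the *same* valence:
`val(overline f̂) = val(hat f̄)`. -/
theorem stmt8 {α : Type*} [DecidableEq α] (Vs : Finset α) (A : Finset (α × α))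
    (hA : ∀ a ∈ A, a.1 ∈ Vs ∧ a.2 ∈ Vs)
    (p : ℕ) (hp : Odd p) (k : ℤ) (hk : 2 * k = (p : ℤ) + 3)
    (h : α × α → Finset (ℤ × ℤ)) (hh : ∀ a ∈ A, memSpk p k (h a))
    (fv : α → ℤ) (fa : α × α → ℤ) (κ : ℤ)
    (hf : DIsEdgeMagic Vs A fv fa κ) :
    ∃ v : ℤ,
      -- the complementary labeling of the induced labeling `f̂` has valence `v`
      DIsEdgeMagic (Vs ×ˢ Finset.Icc (1 : ℤ) (p : ℤ)) (prodArcs A h)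
        (fun x => (p : ℤ) * ((Vs.card : ℤ) + (A.card : ℤ)) + 1 - inducedVert p fv x)
        (fun x => (p : ℤ) * ((Vs.card : ℤ) + (A.card : ℤ)) + 1 - inducedArc p k fa x)
        v ∧
      -- the labeling induced by the complementary labeling `f̄` also has valence `v`
      DIsEdgeMagic (Vs ×ˢ Finset.Icc (1 : ℤ) (p : ℤ)) (prodArcs A h)
        (inducedVert p (fun a => (Vs.card : ℤ) + (A.card : ℤ) + 1 - fv a))
        (inducedArc p k (fun a => (Vs.card : ℤ) + (A.card : ℤ) + 1 - fa a))
        v :=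
  stmt8_general Vs A p k hk h hh fv fa κ hf
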